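/- Fix an integer N > 1. An N-element subset A = {a₁ < … < a_N} ⊆ ℤ is the leading term of a KdV subset if and only if ∑_{i=1}^{N} a_i = N(N−1)/2 and a_i − a_j is not divisible by N for all i ≠ j. -/

import Mathlib

/-!
A KdV set `S` is bounded below and closed under `+N`, so peeling off its leading term `A`
repeatedly shows that `S` is the union of the rays `a + Nℕ`, `a ∈ A`; and if two elements
of `A` were congruent mod `N`, the larger would lie in `S + N`. Thus `A` is a complete residue
system mod `N`; conversely, for any such `A` the union of these rays is closed under `+N`
with leading term `A`. In the class of `a`, the ray `a + Nℕ` has `max (-⌊a/N⌋) 0` negative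
elements and misses `max ⌊a/N⌋ 0` nonnegative ones, so `S` has virtual cardinal zero iff
`∑ ⌊a/N⌋ = 0`, i.e. iff `∑ a = N · 0 + (0 + 1 + ⋯ + (N-1)) = N(N-1)/2`.
-/

/-- A subset `S ⊆ ℤ` is of virtual cardinal zero if both `S \ ℤ≥0` and `ℤ≥0 \ S`
are finite and have the same cardinality. -/
def VirtualCardZero (S : Set ℤ) : Prop :=
  (S \ {n : ℤ | 0 ≤ n}).Finite ∧ ({n : ℤ | 0 ≤ n} \ S).Finite ∧
    (S \ {n : ℤ | 0 ≤ n}).ncard = ({n : ℤ | 0 ≤ n} \ S).ncard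

/-- The shift `S + k = {s + k : s ∈ S}` of a set of integers. -/
def shiftSet (S : Set ℤ) (k : ℤ) : Set ℤ := (fun s => s + k) '' S

/-- A KdV subset (for a fixed `N`): a subset `S ⊆ ℤ` of virtual cardinal zero
such that `S + N ⊆ S`. -/
def IsKdV (N : ℕ) (S : Set ℤ) : Prop :=
  VirtualCardZero S ∧ shiftSet S N ⊆ S

/-- `A` is the leading term of the KdV subset `S`: `A` is an `N`-element set with
`S = A ∪ (S+N)` and `A ∩ (S+N) = ∅`. -/
def IsLeadingTerm (N : ℕ) (S : Set ℤ) (A : Finset ℤ) : Prop :=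
  A.card = N ∧ (↑A : Set ℤ) ∪ shiftSet S N = S ∧ (↑A : Set ℤ) ∩ shiftSet S N = ∅

/-- The mutation `S[a] = {a+1−N} ∪ (S+1)` of a KdV subset `S` at an element `a`
of its leading term. -/
def mutate (N : ℕ) (S : Set ℤ) (a : ℤ) : Set ℤ :=
  {a + 1 - (N : ℤ)} ∪ shiftSet S 1

open Finset

section ShiftClosure

variable {N : ℕ}

def ray (N : ℕ) (a : ℤ) : Set ℤ := {x | a ≤ x ∧ x ≡ a [ZMOD N]}

def shiftClosure (N : ℕ) (A : Finset ℤ) : Set ℤ := ⋃ a ∈ A, ray N a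

lemma mem_shiftClosure {A : Finset ℤ} {x : ℤ} :
    x ∈ shiftClosure N A ↔ ∃ a ∈ A, x ∈ ray N a := by
  simp [shiftClosure]

lemma mem_shiftSet {S : Set ℤ} {k x : ℤ} : x ∈ shiftSet S k ↔ x - k ∈ S :=
  ⟨by rintro ⟨s, hs, rfl⟩; simpa using hs, fun h => ⟨x - k, h, by simp⟩⟩

lemma self_mem_ray (a : ℤ) : a ∈ ray N a := ⟨le_rfl, Int.ModEq.refl a⟩

lemma add_mem_ray {a x : ℤ} (hx : x ∈ ray N a) : x + N ∈ ray N a :=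
  ⟨by have := hx.1; omega, Int.add_modulus_modEq_iff.2 hx.2⟩

lemma sub_mem_ray {a x : ℤ} (hx : x ∈ ray N a) (hxa : x ≠ a) : x - N ∈ ray N a := by
  obtain ⟨hax, hmod⟩ := hx
  have : (N : ℤ) ≤ x - a := Int.le_of_dvd (by omega) hmod.symm.dvd
  exact ⟨by omega, Int.sub_modulus_modEq_iff.2 hmod⟩

lemma ray_subset_of_shiftSet_subset {S : Set ℤ} (hN : 0 < N) (hS : shiftSet S N ⊆ S) {a : ℤ}
    (ha : a ∈ S) : ray N a ⊆ S := by
  have hstep : ∀ k : ℕ, a + N * k ∈ S := by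
    intro k
    induction k with
    | zero => simpa using ha
    | succ k ih => exact hS ⟨_, ih, by push_cast; ring⟩
  rintro x ⟨hax, hmod⟩
  obtain ⟨c, hc⟩ := hmod.symm.dvd
  lift c to ℕ using by nlinarith
  exact (by omega : x = a + N * c) ▸ hstep c

lemma subset_shiftClosure {S : Set ℤ} {A : Finset ℤ} (hN : 0 < N) (hS : BddBelow S)
    (hU : ↑A ∪ shiftSet S N = S) : S ⊆ shiftClosure N A := by
  obtain ⟨m, hm⟩ := hS
  suffices h : ∀ n, m - 1 ≤ n → ∀ s ∈ S, s ≤ n → s ∈ shiftClosure N A from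
    fun s hs => h (max s (m - 1)) (le_max_right _ _) s hs (le_max_left _ _)
  intro n hn
  induction n, hn using Int.leInduction with
  | base => exact fun s hs hsm => absurd (hm hs) (by omega)
  | succ n _ ih =>
    intro s hs hsn
    rw [← hU] at hs
    rcases hs with hs | hs
    · exact mem_shiftClosure.2 ⟨s, hs, self_mem_ray s⟩
    · obtain ⟨a, ha, hsa⟩ := mem_shiftClosure.1 (ih _ (mem_shiftSet.1 hs) (by omega))
      exact mem_shiftClosure.2 ⟨a, ha, sub_add_cancel s (N : ℤ) ▸ add_mem_ray hsa⟩

lemma IsLeadingTerm.subset {S : Set ℤ} {A : Finset ℤ} (hL : IsLeadingTerm N S A) :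
    (A : Set ℤ) ⊆ S :=
  hL.2.1 ▸ Set.subset_union_left

lemma IsLeadingTerm.eq_shiftClosure {S : Set ℤ} {A : Finset ℤ} (hN : 0 < N) (hK : IsKdV N S)
    (hL : IsLeadingTerm N S A) : S = shiftClosure N A := by
  obtain ⟨⟨hneg, -, -⟩, hS⟩ := hK
  refine (subset_shiftClosure hN ?_ hL.2.1).antisymm ?_
  · have hbdd : BddBelow ((S \ {n | 0 ≤ n}) ∪ {n | 0 ≤ n}) :=
      hneg.bddBelow.union ⟨0, fun _ hn => hn⟩
    exact hbdd.mono (by rw [Set.sdiff_union_self]; exact Set.subset_union_left)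
  · exact Set.iUnion₂_subset fun a ha => ray_subset_of_shiftSet_subset hN hS (hL.subset ha)

lemma IsLeadingTerm.not_dvd_sub {S : Set ℤ} {A : Finset ℤ} (hN : 0 < N) (hS : shiftSet S N ⊆ S)
    (hL : IsLeadingTerm N S A) : ∀ a ∈ A, ∀ b ∈ A, a ≠ b → ¬ (N : ℤ) ∣ (a - b) := by
  have hlt : ∀ a ∈ A, ∀ b ∈ A, a < b → ¬ (N : ℤ) ∣ (b - a) := by
    intro a ha b hb hab hdvd
    have hray : b - N ∈ ray N a := sub_mem_ray ⟨hab.le, (Int.modEq_of_dvd hdvd).symm⟩ hab.ne'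
    have hshift : b ∈ (A : Set ℤ) ∩ shiftSet S N :=
      ⟨hb, mem_shiftSet.2 (ray_subset_of_shiftSet_subset hN hS (hL.subset ha) hray)⟩
    simp [hL.2.2] at hshift
  intro a ha b hb hne hdvd
  rcases hne.lt_or_gt with h | h
  · exact hlt a ha b hb h (by simpa using hdvd.neg_right)
  · exact hlt b hb a ha h hdvd

lemma shiftSet_shiftClosure_subset (N : ℕ) (A : Finset ℤ) :
    shiftSet (shiftClosure N A) N ⊆ shiftClosure N A := by
  intro x hx
  obtain ⟨a, ha, hxa⟩ := mem_shiftClosure.1 (mem_shiftSet.1 hx)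
  exact mem_shiftClosure.2 ⟨a, ha, sub_add_cancel x (N : ℤ) ▸ add_mem_ray hxa⟩

end ShiftClosure

lemma injOn_emod_of_not_dvd_sub {A : Finset ℤ} {n : ℤ}
    (h : ∀ a ∈ A, ∀ b ∈ A, a ≠ b → ¬ n ∣ (a - b)) : Set.InjOn (· % n) A :=
  fun a ha b hb hab => by_contra fun hne => h a ha b hb hne (Int.ModEq.dvd hab.symm)

lemma sum_Ico_zero_id_mul_two (n : ℕ) : (∑ i ∈ Ico (0 : ℤ) n, i) * 2 = n * (n - 1) := by
  rw [Int.Ico_eq_finset_map, sum_map]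
  simp only [sub_zero, Int.toNat_natCast, Function.Embedding.trans_apply,
    Nat.castEmbedding_apply, addLeftEmbedding_apply, zero_add]
  obtain _ | n := n
  · simp
  · rw [← Nat.cast_sum, ← Nat.cast_two, ← Nat.cast_mul, sum_range_id_mul_two]
    push_cast
    ring

lemma pairwiseDisjoint_filter_modEq {A : Finset ℤ} {n : ℤ} (hinj : Set.InjOn (· % n) A)
    (s : ℤ → Finset ℤ) : (A : Set ℤ).PairwiseDisjoint fun a => {x ∈ s a | x ≡ a [ZMOD n]} := by
  intro a ha b hb hab
  simp only [Function.onFun, disjoint_left, mem_filter]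
  rintro x ⟨-, hxa⟩ ⟨-, hxb⟩
  exact hab (hinj ha hb (hxa.symm.trans hxb))

lemma card_filter_modEq_Ico_self_zero {N : ℕ} (hN : 0 < N) (a : ℤ) :
    (#{x ∈ Ico a 0 | x ≡ a [ZMOD N]} : ℤ) = max (-(a / N)) 0 := by
  rw [Int.Ico_filter_modEq_card _ _ (by exact_mod_cast hN)]
  simp [neg_div, Int.ceil_neg, Rat.floor_intCast_div_natCast]

lemma card_filter_modEq_Ico_zero_self {N : ℕ} (hN : 0 < N) (a : ℤ) :
    (#{x ∈ Ico 0 a | x ≡ a [ZMOD N]} : ℤ) = max (a / N) 0 := by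
  rw [Int.Ico_filter_modEq_card _ _ (by exact_mod_cast hN)]
  simp [neg_div, Int.ceil_neg, Rat.floor_intCast_div_natCast]

lemma shiftClosure_diff_nonneg (N : ℕ) (A : Finset ℤ) :
    shiftClosure N A \ {n | 0 ≤ n} = ↑(A.biUnion fun a => {x ∈ Ico a 0 | x ≡ a [ZMOD N]}) := by
  ext x
  simp only [Set.mem_sdiff, mem_shiftClosure, ray, Set.mem_ofPred_eq, not_le, coe_biUnion,
    SetLike.mem_coe, coe_filter, mem_Ico, Set.mem_iUnion, exists_prop]
  grind

section CompleteResidueSystem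

variable {N : ℕ} {A : Finset ℤ} (hN : 0 < N) (hinj : Set.InjOn (· % (N : ℤ)) A) (hcard : #A = N)
include hN hinj hcard

lemma image_emod_eq_Ico : A.image (· % (N : ℤ)) = Ico 0 (N : ℤ) := by
  refine eq_of_subset_of_card_le (fun r hr => ?_) ?_
  · obtain ⟨a, -, rfl⟩ := mem_image.1 hr
    exact mem_Ico.2 ⟨Int.emod_nonneg a (by omega), Int.emod_lt_of_pos a (by omega)⟩
  · simp [card_image_of_injOn hinj, hcard]

lemma sum_emod_mul_two : (∑ a ∈ A, a % (N : ℤ)) * 2 = N * (N - 1) := by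
  calc (∑ a ∈ A, a % (N : ℤ)) * 2 = (∑ r ∈ A.image (· % (N : ℤ)), r) * 2 := by
        rw [sum_image hinj]
    _ = N * (N - 1) := by rw [image_emod_eq_Ico hN hinj hcard, sum_Ico_zero_id_mul_two]

lemma sum_eq_iff_sum_ediv_eq_zero :
    ∑ a ∈ A, a = N * (N - 1) / 2 ↔ ∑ a ∈ A, a / (N : ℤ) = 0 := by
  have hdecomp : ∑ a ∈ A, a = N * ∑ a ∈ A, a / (N : ℤ) + ∑ a ∈ A, a % (N : ℤ) := by
    rw [mul_sum, ← sum_add_distrib]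
    exact sum_congr rfl fun a _ => (Int.mul_ediv_add_emod a N).symm
  have hres := sum_emod_mul_two hN hinj hcard
  constructor
  · intro h
    have : (N : ℤ) * ∑ a ∈ A, a / (N : ℤ) = 0 := by omega
    exact (mul_eq_zero.1 this).resolve_left (by positivity)
  · intro h
    rw [h] at hdecomp
    omega

lemma nonneg_diff_shiftClosure :
    {n | 0 ≤ n} \ shiftClosure N A = ↑(A.biUnion fun a => {x ∈ Ico 0 a | x ≡ a [ZMOD N]}) := by
  ext x
  simp only [Set.mem_sdiff, Set.mem_ofPred_eq, mem_shiftClosure, coe_biUnion, SetLike.mem_coe,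
    coe_filter, mem_Ico, Set.mem_iUnion, exists_prop, not_exists, not_and]
  constructor
  · rintro ⟨hx, hxS⟩
    have hr : x % (N : ℤ) ∈ A.image (· % (N : ℤ)) := by
      rw [image_emod_eq_Ico hN hinj hcard]
      exact mem_Ico.2 ⟨Int.emod_nonneg x (by omega), Int.emod_lt_of_pos x (by omega)⟩
    obtain ⟨a, ha, hax⟩ := mem_image.1 hr
    have hxa : x < a := not_le.1 fun hax' => hxS a ha ⟨hax', hax.symm⟩
    exact ⟨a, ha, ⟨hx, hxa⟩, hax.symm⟩
  · rintro ⟨a, ha, ⟨hx, hxa⟩, hmod⟩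
    refine ⟨hx, fun b hb ⟨hbx, hxb⟩ => ?_⟩
    have : a = b := hinj ha hb (hmod.symm.trans hxb)
    omega

lemma virtualCardZero_shiftClosure_iff :
    VirtualCardZero (shiftClosure N A) ↔ ∑ a ∈ A, a / (N : ℤ) = 0 := by
  rw [VirtualCardZero, shiftClosure_diff_nonneg, nonneg_diff_shiftClosure hN hinj hcard,
    Set.ncard_coe_finset, Set.ncard_coe_finset,
    card_biUnion (pairwiseDisjoint_filter_modEq hinj _),
    card_biUnion (pairwiseDisjoint_filter_modEq hinj _)]
  simp only [finite_toSet, true_and]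
  rw [← Nat.cast_inj (R := ℤ), eq_comm, ← sub_eq_zero]
  push_cast
  simp only [card_filter_modEq_Ico_self_zero hN, card_filter_modEq_Ico_zero_self hN,
    ← sum_sub_distrib, max_zero_sub_max_neg_zero_eq_self]

lemma isLeadingTerm_shiftClosure : IsLeadingTerm N (shiftClosure N A) A := by
  refine ⟨hcard, ?_, ?_⟩
  · refine (Set.union_subset (fun a ha => mem_shiftClosure.2 ⟨a, ha, self_mem_ray a⟩)
      (shiftSet_shiftClosure_subset N A)).antisymm fun x hx => ?_
    obtain ⟨a, ha, hxa⟩ := mem_shiftClosure.1 hx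
    by_cases h : x = a
    · exact Or.inl (h ▸ ha)
    · exact Or.inr (mem_shiftSet.2 (mem_shiftClosure.2 ⟨a, ha, sub_mem_ray hxa h⟩))
  · refine Set.eq_empty_of_forall_notMem fun x ⟨hx, hxS⟩ => ?_
    obtain ⟨b, hb, hbx, hxb⟩ := mem_shiftClosure.1 (mem_shiftSet.1 hxS)
    have : x = b := hinj hx hb (Int.sub_modulus_modEq_iff.1 hxb)
    omega

end CompleteResidueSystem

/-- Fix `N > 1`.  An `N`-element subset `A ⊆ ℤ` is the leading term
of a KdV subset if and only if `∑_{a ∈ A} a = N(N−1)/2` and `a − b` is not divisible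
by `N` for all distinct `a, b ∈ A`. -/
theorem leadingTerm_characterization (N : ℕ) (hN : 1 < N)
    (A : Finset ℤ) (hcard : A.card = N) :
    (∃ S : Set ℤ, IsKdV N S ∧ IsLeadingTerm N S A) ↔
      (∑ a ∈ A, a = (N : ℤ) * ((N : ℤ) - 1) / 2 ∧
        ∀ a ∈ A, ∀ b ∈ A, a ≠ b → ¬ (N : ℤ) ∣ (a - b)) := by
  have hN₀ : 0 < N := by omega
  constructor
  · rintro ⟨S, hK, hL⟩
    have hres := hL.not_dvd_sub hN₀ hK.2
    have hinj := injOn_emod_of_not_dvd_sub hres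
    refine ⟨(sum_eq_iff_sum_ediv_eq_zero hN₀ hinj hcard).2 ?_, hres⟩
    rw [← virtualCardZero_shiftClosure_iff hN₀ hinj hcard, ← hL.eq_shiftClosure hN₀ hK]
    exact hK.1
  · rintro ⟨hsum, hres⟩
    have hinj := injOn_emod_of_not_dvd_sub hres
    refine ⟨shiftClosure N A, ⟨?_, shiftSet_shiftClosure_subset N A⟩,
      isLeadingTerm_shiftClosure hN₀ hinj hcard⟩
    exact (virtualCardZero_shiftClosure_iff hN₀ hinj hcard).2
      ((sum_eq_iff_sum_ediv_eq_zero hN₀ hinj hcard).1 hsum)
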